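/- Under the hypotheses of the previous recurrence identity, if additionally all $\mathcal{C}_{n,p} \geq 0$ and $(\Sigma_p)$ is monotonically increasing, then $a_n \geq \frac{4}{n} a_{n-1} + \frac{n-2}{n} a_{n-2}$ for $n \geq 3$, and consequently $a_n \geq \frac{n+2}{n}\min(a_{n-1}, a_{n-2})$ provided $a_{n-1}, a_{n-2} \geq 0$. -/
import Mathlib


theorem stmt_14 (C : ℕ → ℕ → ℝ) (S : ℕ → ℝ) (a : ℕ → ℝ)
    (hbd : ∀ m q : ℕ, (q < 1 ∨ m < q) → C m q = 0)
    (hrec : ∀ n p : ℕ, 3 ≤ n → 1 ≤ p → p ≤ n →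
      C n p = 4/(n : ℝ) * C (n-1) (p-1) + ((n : ℝ) - 2)/(n : ℝ) * C (n-2) p)
    (hCnonneg : ∀ n p, 0 ≤ C n p)
    (hSmono : Monotone S)
    (ha : ∀ n : ℕ, a n = 2 * ∑ p ∈ Finset.Icc 1 n, C n p * S p) :
    ∀ n : ℕ, 3 ≤ n →
      (4/(n : ℝ) * a (n-1) + ((n : ℝ) - 2)/(n : ℝ) * a (n-2) ≤ a n) ∧
      (0 ≤ a (n-1) → 0 ≤ a (n-2) →
        ((n : ℝ) + 2)/(n : ℝ) * min (a (n-1)) (a (n-2)) ≤ a n) := by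
  have hsum : ∀ (m : ℕ) (f : ℕ → ℝ),
      ∑ p ∈ Finset.Icc 1 m, f p = ∑ i ∈ Finset.range m, f (i+1) := by
    intro m f
    rw [← Finset.Ico_add_one_right_eq_Icc, Finset.sum_Ico_eq_sum_range]
    simp [add_comm]
  have ha' : ∀ m : ℕ, a m = 2 * ∑ i ∈ Finset.range m, C m (i+1) * S (i+1) := by
    intro m; rw [ha, hsum]
  intro n hn
  have hn3 : (3:ℝ) ≤ (n:ℝ) := by exact_mod_cast hn
  have hnpos : (0:ℝ) < (n:ℝ) := by linarith
  have h4 : (0:ℝ) ≤ 4/(n:ℝ) := by positivity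
  have h2 : (0:ℝ) ≤ ((n:ℝ)-2)/(n:ℝ) := by
    apply div_nonneg <;> linarith
  have han : a n = 4/(n:ℝ) * (2 * ∑ i ∈ Finset.range n, C (n-1) i * S (i+1))
      + ((n:ℝ)-2)/(n:ℝ) * (2 * ∑ i ∈ Finset.range n, C (n-2) (i+1) * S (i+1)) := by
    rw [ha' n]
    have hc : ∀ i ∈ Finset.range n, C n (i+1) * S (i+1)
        = 4/(n:ℝ) * (C (n-1) i * S (i+1))
          + ((n:ℝ)-2)/(n:ℝ) * (C (n-2) (i+1) * S (i+1)) := by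
      intro i hi
      simp only [Finset.mem_range] at hi
      rw [hrec n (i+1) hn (by omega) (by omega)]
      simp only [Nat.add_sub_cancel]
      ring
    rw [Finset.sum_congr rfl hc, Finset.sum_add_distrib, ← Finset.mul_sum, ← Finset.mul_sum]
    ring
  have hA : a (n-1) ≤ 2 * ∑ i ∈ Finset.range n, C (n-1) i * S (i+1) := by
    rw [ha' (n-1)]
    have hns : n = (n-1) + 1 := by omega
    rw [hns, Finset.sum_range_succ']
    simp only [Nat.add_sub_cancel]
    rw [hbd (n-1) 0 (Or.inl one_pos)]
    have : ∀ i ∈ Finset.range (n-1), C (n-1) (i+1) * S (i+1)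
        ≤ C (n-1) (i+1) * S (i+1+1) := by
      intro i _
      exact mul_le_mul_of_nonneg_left (hSmono (by omega)) (hCnonneg _ _)
    have := Finset.sum_le_sum this
    nlinarith [this]
  have hB : a (n-2) = 2 * ∑ i ∈ Finset.range n, C (n-2) (i+1) * S (i+1) := by
    rw [ha' (n-2)]
    congr 1
    apply Finset.sum_subset
    · exact Finset.range_subset_range.2 (by omega)
    · intro i hi hni
      simp only [Finset.mem_range, not_lt] at hi hni
      rw [hbd (n-2) (i+1) (Or.inr (by omega))]
      ring
  have hmain : 4/(n : ℝ) * a (n-1) + ((n : ℝ) - 2)/(n : ℝ) * a (n-2) ≤ a n := by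
    rw [han, hB]
    have := mul_le_mul_of_nonneg_left hA h4
    linarith
  refine ⟨hmain, fun h1 h2' => ?_⟩
  have hm1 : min (a (n-1)) (a (n-2)) ≤ a (n-1) := min_le_left _ _
  have hm2 : min (a (n-1)) (a (n-2)) ≤ a (n-2) := min_le_right _ _
  have hdecomp : ((n:ℝ)+2)/(n:ℝ) * min (a (n-1)) (a (n-2))
      = 4/(n:ℝ) * min (a (n-1)) (a (n-2)) + ((n:ℝ)-2)/(n:ℝ) * min (a (n-1)) (a (n-2)) := by
    field_simp
    ring
  rw [hdecomp]
  have := mul_le_mul_of_nonneg_left hm1 h4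
  have := mul_le_mul_of_nonneg_left hm2 h2
  linarith
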